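/- Let u : ℝ × ℝ → ℂ be a smooth solution of i∂ₜu + ∂ₓ²u = α u v + β u|u|², where v : ℝ × ℝ → ℝ is smooth and α, β are real constants. Then pointwise, ∂ₜ Im(u ∂ₓū) = -∂ₓ² Re(u ∂ₓū) + 2∂ₓ(|∂ₓu|²) + α|u|² ∂ₓv + (β/2) ∂ₓ(|u|⁴). -/

import Mathlib

open Complex

section helpers

variable {E : Type*} [NormedAddCommGroup E] [NormedSpace ℝ E]

noncomputable def Dx (H : ℝ × ℝ → E) : ℝ × ℝ → E := fun p => fderiv ℝ H p (0, 1)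
noncomputable def Dt (H : ℝ × ℝ → E) : ℝ × ℝ → E := fun p => fderiv ℝ H p (1, 0)

lemma contDiff_Dx {H : ℝ × ℝ → E} (h : ContDiff ℝ (⊤ : ℕ∞) H) : ContDiff ℝ (⊤ : ℕ∞) (Dx H) :=
  (h.fderiv_right (by simp)).clm_apply contDiff_const

lemma contDiff_Dt {H : ℝ × ℝ → E} (h : ContDiff ℝ (⊤ : ℕ∞) H) : ContDiff ℝ (⊤ : ℕ∞) (Dt H) :=
  (h.fderiv_right (by simp)).clm_apply contDiff_const

lemma hasDerivAt_sliceX {H : ℝ × ℝ → E} (h : ContDiff ℝ (⊤ : ℕ∞) H) (t x : ℝ) :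
    HasDerivAt (fun y => H (t, y)) (Dx H (t, x)) x := by
  have h1 : HasDerivAt (fun y : ℝ => ((t, y) : ℝ × ℝ)) (0, 1) x :=
    (hasDerivAt_const x t).prodMk (hasDerivAt_id x)
  exact ((h.differentiable (by simp) (t, x)).hasFDerivAt).comp_hasDerivAt x h1

lemma hasDerivAt_sliceT {H : ℝ × ℝ → E} (h : ContDiff ℝ (⊤ : ℕ∞) H) (t x : ℝ) :
    HasDerivAt (fun s => H (s, x)) (Dt H (t, x)) t := by
  have h1 : HasDerivAt (fun s : ℝ => ((s, x) : ℝ × ℝ)) (1, 0) t :=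
    (hasDerivAt_id t).prodMk (hasDerivAt_const t x)
  exact ((h.differentiable (by simp) (t, x)).hasFDerivAt).comp_hasDerivAt t h1

lemma Dx_Dt_comm {H : ℝ × ℝ → E} (h : ContDiff ℝ (⊤ : ℕ∞) H) : Dx (Dt H) = Dt (Dx H) := by
  funext p
  have hf' : ∀ q, HasFDerivAt H (fderiv ℝ H q) q :=
    fun q => (h.differentiable (by simp) q).hasFDerivAt
  have hx : HasFDerivAt (fderiv ℝ H) (fderiv ℝ (fderiv ℝ H) p) p :=
    ((h.fderiv_right (m := (⊤ : ℕ∞)) (by simp)).differentiable (by simp) p).hasFDerivAt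
  have hsymm := second_derivative_symmetric hf' hx
  have e1 : HasFDerivAt (Dt H)
      ((ContinuousLinearMap.apply ℝ E ((1 : ℝ), (0 : ℝ))).comp (fderiv ℝ (fderiv ℝ H) p)) p :=
    (ContinuousLinearMap.apply ℝ E ((1 : ℝ), (0 : ℝ))).hasFDerivAt.comp p hx
  have e2 : HasFDerivAt (Dx H)
      ((ContinuousLinearMap.apply ℝ E ((0 : ℝ), (1 : ℝ))).comp (fderiv ℝ (fderiv ℝ H) p)) p :=
    (ContinuousLinearMap.apply ℝ E ((0 : ℝ), (1 : ℝ))).hasFDerivAt.comp p hx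
  have h1 : Dx (Dt H) p = fderiv ℝ (fderiv ℝ H) p (0, 1) (1, 0) := by
    have := e1.fderiv
    simp only [Dx, this]
    rfl
  rw [h1, hsymm]
  have := e2.fderiv
  simp only [Dt, this]
  rfl

end helpers

theorem momentum_density_evolution
    (u : ℝ → ℝ → ℂ) (v : ℝ → ℝ → ℝ) (α β : ℝ)
    (hu : ContDiff ℝ (⊤ : ℕ∞) (fun p : ℝ × ℝ => u p.1 p.2))
    (hv : ContDiff ℝ (⊤ : ℕ∞) (fun p : ℝ × ℝ => v p.1 p.2))
    (heq : ∀ t x : ℝ,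
      Complex.I * deriv (fun s => u s x) t + iteratedDeriv 2 (fun y => u t y) x
        = (α : ℂ) * u t x * (v t x : ℂ)
          + (β : ℂ) * u t x * ((‖u t x‖ : ℂ)) ^ 2) :
    ∀ t x : ℝ,
      deriv (fun s => (u s x * (starRingEnd ℂ) (deriv (fun y => u s y) x)).im) t
        = - iteratedDeriv 2
              (fun y => (u t y * (starRingEnd ℂ) (deriv (fun z => u t z) y)).re) x
          + 2 * deriv (fun y => ‖deriv (fun z => u t z) y‖ ^ 2) x
          + α * ‖u t x‖ ^ 2 * deriv (fun y => v t y) x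
          + (β / 2) * deriv (fun y => ‖u t y‖ ^ 4) x := by
  have hU1 := contDiff_Dx hu
  have hU2 := contDiff_Dx hU1
  have hT0 := contDiff_Dt hu
  have dxF : ∀ t x : ℝ, HasDerivAt (fun y => u t y)
      (Dx (fun p : ℝ × ℝ => u p.1 p.2) (t, x)) x := fun t x => hasDerivAt_sliceX hu t x
  have dxU1 : ∀ t x : ℝ, HasDerivAt (fun y => Dx (fun p : ℝ × ℝ => u p.1 p.2) (t, y))
      (Dx (Dx (fun p : ℝ × ℝ => u p.1 p.2)) (t, x)) x := fun t x => hasDerivAt_sliceX hU1 t x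
  have dxU2 : ∀ t x : ℝ, HasDerivAt (fun y => Dx (Dx (fun p : ℝ × ℝ => u p.1 p.2)) (t, y))
      (Dx (Dx (Dx (fun p : ℝ × ℝ => u p.1 p.2))) (t, x)) x := fun t x => hasDerivAt_sliceX hU2 t x
  have dxG : ∀ t x : ℝ, HasDerivAt (fun y => v t y)
      (Dx (fun p : ℝ × ℝ => v p.1 p.2) (t, x)) x := fun t x => hasDerivAt_sliceX hv t x
  have dtF : ∀ t x : ℝ, HasDerivAt (fun s => u s x)
      (Dt (fun p : ℝ × ℝ => u p.1 p.2) (t, x)) t := fun t x => hasDerivAt_sliceT hu t x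
  have dxT0 : ∀ t x : ℝ, HasDerivAt (fun y => Dt (fun p : ℝ × ℝ => u p.1 p.2) (t, y))
      (Dx (Dt (fun p : ℝ × ℝ => u p.1 p.2)) (t, x)) x := fun t x => hasDerivAt_sliceX hT0 t x
  have dtU1 : ∀ t x : ℝ, HasDerivAt (fun s => Dx (fun p : ℝ × ℝ => u p.1 p.2) (s, x))
      (Dx (Dt (fun p : ℝ × ℝ => u p.1 p.2)) (t, x)) t := by
    intro t x
    have h := hasDerivAt_sliceT hU1 t x
    rwa [← Dx_Dt_comm hu] at h
  -- the equation, solved for the time derivative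
  have key : ∀ t x : ℝ, Dt (fun p : ℝ × ℝ => u p.1 p.2) (t, x)
      = -Complex.I * ((α : ℂ) * u t x * (v t x : ℂ)
          + (β : ℂ) * u t x * u t x * (starRingEnd ℂ) (u t x)
          - Dx (Dx (fun p : ℝ × ℝ => u p.1 p.2)) (t, x)) := by
    intro t x
    have h := heq t x
    rw [(dtF t x).deriv] at h
    have h2 : iteratedDeriv 2 (fun y => u t y) x
        = Dx (Dx (fun p : ℝ × ℝ => u p.1 p.2)) (t, x) := by
      rw [show (2 : ℕ) = 1 + 1 from rfl, iteratedDeriv_succ, iteratedDeriv_one]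
      have e : deriv (fun y => u t y) = fun y => Dx (fun p : ℝ × ℝ => u p.1 p.2) (t, y) :=
        funext fun y => (dxF t y).deriv
      rw [e]
      exact (dxU1 t x).deriv
    rw [h2] at h
    have habs : ((‖u t x‖ : ℝ) : ℂ) ^ 2 = u t x * (starRingEnd ℂ) (u t x) := by
      rw [← Complex.ofReal_pow, Complex.sq_norm, Complex.mul_conj]
    rw [habs] at h
    linear_combination (-Complex.I) * h
      + (Dt (fun p : ℝ × ℝ => u p.1 p.2) (t, x)) * Complex.I_mul_I
  -- spatial derivative of the equation
  have keyx : ∀ t x : ℝ, Dx (Dt (fun p : ℝ × ℝ => u p.1 p.2)) (t, x)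
      = -Complex.I * (((α : ℂ) * Dx (fun p : ℝ × ℝ => u p.1 p.2) (t, x) * (v t x : ℂ)
            + (α : ℂ) * u t x * ((Dx (fun p : ℝ × ℝ => v p.1 p.2) (t, x) : ℝ) : ℂ))
          + ((β : ℂ) * Dx (fun p : ℝ × ℝ => u p.1 p.2) (t, x) * u t x * (starRingEnd ℂ) (u t x)
            + (β : ℂ) * u t x * Dx (fun p : ℝ × ℝ => u p.1 p.2) (t, x) * (starRingEnd ℂ) (u t x)
            + (β : ℂ) * u t x * u t x
                * (starRingEnd ℂ) (Dx (fun p : ℝ × ℝ => u p.1 p.2) (t, x)))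
          - Dx (Dx (Dx (fun p : ℝ × ℝ => u p.1 p.2))) (t, x)) := by
    intro t x
    have hfun : (fun y => Dt (fun p : ℝ × ℝ => u p.1 p.2) (t, y))
        = fun y => -Complex.I * ((α : ℂ) * u t y * (v t y : ℂ)
            + (β : ℂ) * u t y * u t y * (starRingEnd ℂ) (u t y)
            - Dx (Dx (fun p : ℝ × ℝ => u p.1 p.2)) (t, y)) :=
      funext fun y => key t y
    have h1 := dxF t x
    have hconj : HasDerivAt (fun y => (starRingEnd ℂ) (u t y))
        ((starRingEnd ℂ) (Dx (fun p : ℝ × ℝ => u p.1 p.2) (t, x))) x := by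
      simpa only [starRingEnd_apply] using h1.star
    have hv' : HasDerivAt (fun y => ((v t y : ℝ) : ℂ))
        (((Dx (fun p : ℝ × ℝ => v p.1 p.2) (t, x) : ℝ) : ℂ)) x := by
      exact (dxG t x).ofReal_comp
    have hA : HasDerivAt (fun y => (α : ℂ) * u t y * ((v t y : ℝ) : ℂ))
        ((α : ℂ) * Dx (fun p : ℝ × ℝ => u p.1 p.2) (t, x) * (v t x : ℂ)
          + (α : ℂ) * u t x * ((Dx (fun p : ℝ × ℝ => v p.1 p.2) (t, x) : ℝ) : ℂ)) x := by
      have := ((hasDerivAt_const x ((α : ℝ) : ℂ)).mul h1).mul hv'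
      convert this using 1
      · rfl
      · rfl
      change _ = _ + (α : ℂ) * u t x * _
      ring
    have hB : HasDerivAt (fun y => (β : ℂ) * u t y * u t y * (starRingEnd ℂ) (u t y))
        ((β : ℂ) * Dx (fun p : ℝ × ℝ => u p.1 p.2) (t, x) * u t x * (starRingEnd ℂ) (u t x)
          + (β : ℂ) * u t x * Dx (fun p : ℝ × ℝ => u p.1 p.2) (t, x) * (starRingEnd ℂ) (u t x)
          + (β : ℂ) * u t x * u t x
              * (starRingEnd ℂ) (Dx (fun p : ℝ × ℝ => u p.1 p.2) (t, x))) x := by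
      have := (((hasDerivAt_const x ((β : ℝ) : ℂ)).mul h1).mul h1).mul hconj
      convert this using 1
      · rfl
      · rfl
      change _ = ((_ + _) * _ + (β : ℂ) * u t x * _) * _ + (β : ℂ) * u t x * u t x * _
      ring
    have hR := ((hA.add hB).sub (dxU2 t x)).const_mul (-Complex.I)
    have hL := dxT0 t x
    rw [hfun] at hL
    exact hL.unique hR
  intro t x
  -- LHS
  have e1 : (fun s => (u s x * (starRingEnd ℂ) (deriv (fun y => u s y) x)).im)
      = fun s => (u s x * (starRingEnd ℂ) (Dx (fun p : ℝ × ℝ => u p.1 p.2) (s, x))).im := by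
    funext s
    rw [(dxF s x).deriv]
  rw [e1]
  have hLim : HasDerivAt
      (fun s => (u s x * (starRingEnd ℂ) (Dx (fun p : ℝ × ℝ => u p.1 p.2) (s, x))).im)
      ((Dt (fun p : ℝ × ℝ => u p.1 p.2) (t, x)
          * (starRingEnd ℂ) (Dx (fun p : ℝ × ℝ => u p.1 p.2) (t, x))
        + u t x * (starRingEnd ℂ) (Dx (Dt (fun p : ℝ × ℝ => u p.1 p.2)) (t, x))).im) t := by
    have hconj : HasDerivAt
        (fun s => (starRingEnd ℂ) (Dx (fun p : ℝ × ℝ => u p.1 p.2) (s, x)))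
        ((starRingEnd ℂ) (Dx (Dt (fun p : ℝ × ℝ => u p.1 p.2)) (t, x))) t := by
      simpa only [starRingEnd_apply] using (dtU1 t x).star
    simpa only [Function.comp_def, Complex.imCLM_apply, Pi.mul_apply] using
      Complex.imCLM.hasFDerivAt.comp_hasDerivAt t ((dtF t x).mul hconj)
  rw [hLim.deriv]
  -- second x-derivative of Re (u conj u_x)
  have e2 : (fun y => (u t y * (starRingEnd ℂ) (deriv (fun z => u t z) y)).re)
      = fun y => (u t y * (starRingEnd ℂ) (Dx (fun p : ℝ × ℝ => u p.1 p.2) (t, y))).re := by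
    funext y
    rw [(dxF t y).deriv]
  rw [e2, show (2 : ℕ) = 1 + 1 from rfl, iteratedDeriv_succ, iteratedDeriv_one]
  have inner1 : deriv (fun y =>
        (u t y * (starRingEnd ℂ) (Dx (fun p : ℝ × ℝ => u p.1 p.2) (t, y))).re)
      = fun y => (Dx (fun p : ℝ × ℝ => u p.1 p.2) (t, y)
            * (starRingEnd ℂ) (Dx (fun p : ℝ × ℝ => u p.1 p.2) (t, y))
          + u t y * (starRingEnd ℂ) (Dx (Dx (fun p : ℝ × ℝ => u p.1 p.2)) (t, y))).re := by
    funext y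
    have hconj : HasDerivAt
        (fun z => (starRingEnd ℂ) (Dx (fun p : ℝ × ℝ => u p.1 p.2) (t, z)))
        ((starRingEnd ℂ) (Dx (Dx (fun p : ℝ × ℝ => u p.1 p.2)) (t, y))) y := by
      simpa only [starRingEnd_apply] using (dxU1 t y).star
    have := Complex.reCLM.hasFDerivAt.comp_hasDerivAt y ((dxF t y).mul hconj)
    simpa only [Function.comp_def, Complex.reCLM_apply, Pi.mul_apply, Pi.add_apply] using this.deriv
  rw [inner1]
  have outer1 : HasDerivAt (fun y => (Dx (fun p : ℝ × ℝ => u p.1 p.2) (t, y) * (starRingEnd ℂ) (Dx (fun p : ℝ × ℝ => u p.1 p.2) (t, y)) + u t y * (starRingEnd ℂ) (Dx (Dx (fun p : ℝ × ℝ => u p.1 p.2)) (t, y))).re) ((Dx (Dx (fun p : ℝ × ℝ => u p.1 p.2)) (t, x) * (starRingEnd ℂ) (Dx (fun p : ℝ × ℝ => u p.1 p.2) (t, x)) + Dx (fun p : ℝ × ℝ => u p.1 p.2) (t, x) * (starRingEnd ℂ) (Dx (Dx (fun p : ℝ × ℝ => u p.1 p.2)) (t, x)) + (Dx (fun p : ℝ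 × ℝ => u p.1 p.2) (t, x) * (starRingEnd ℂ) (Dx (Dx (fun p : ℝ × ℝ => u p.1 p.2)) (t, x)) + u t x * (starRingEnd ℂ) (Dx (Dx (Dx (fun p : ℝ × ℝ => u p.1 p.2))) (t, x)))).re) x := by
    have hc1 : HasDerivAt
        (fun y => (starRingEnd ℂ) (Dx (fun p : ℝ × ℝ => u p.1 p.2) (t, y)))
        ((starRingEnd ℂ) (Dx (Dx (fun p : ℝ × ℝ => u p.1 p.2)) (t, x))) x := by
      simpa only [starRingEnd_apply] using (dxU1 t x).star
    have hc2 : HasDerivAt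
        (fun y => (starRingEnd ℂ) (Dx (Dx (fun p : ℝ × ℝ => u p.1 p.2)) (t, y)))
        ((starRingEnd ℂ) (Dx (Dx (Dx (fun p : ℝ × ℝ => u p.1 p.2))) (t, x))) x := by
      simpa only [starRingEnd_apply] using (dxU2 t x).star
    have := Complex.reCLM.hasFDerivAt.comp_hasDerivAt x
      (((dxU1 t x).mul hc1).add ((dxF t x).mul hc2))
    simpa only [Function.comp_def, Complex.reCLM_apply, Pi.mul_apply, Pi.add_apply] using this
  rw [outer1.deriv]
  -- derivative of |u_x|^2
  have e3 : (fun y => ‖deriv (fun z => u t z) y‖ ^ 2)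
      = fun y => (Dx (fun p : ℝ × ℝ => u p.1 p.2) (t, y)
          * (starRingEnd ℂ) (Dx (fun p : ℝ × ℝ => u p.1 p.2) (t, y))).re := by
    funext y
    rw [(dxF t y).deriv, Complex.sq_norm, Complex.mul_conj, Complex.ofReal_re]
  rw [e3]
  have d3 : HasDerivAt (fun y => (Dx (fun p : ℝ × ℝ => u p.1 p.2) (t, y)
          * (starRingEnd ℂ) (Dx (fun p : ℝ × ℝ => u p.1 p.2) (t, y))).re)
      ((Dx (Dx (fun p : ℝ × ℝ => u p.1 p.2)) (t, x)
          * (starRingEnd ℂ) (Dx (fun p : ℝ × ℝ => u p.1 p.2) (t, x))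
        + Dx (fun p : ℝ × ℝ => u p.1 p.2) (t, x)
          * (starRingEnd ℂ) (Dx (Dx (fun p : ℝ × ℝ => u p.1 p.2)) (t, x))).re) x := by
    have hc1 : HasDerivAt
        (fun y => (starRingEnd ℂ) (Dx (fun p : ℝ × ℝ => u p.1 p.2) (t, y)))
        ((starRingEnd ℂ) (Dx (Dx (fun p : ℝ × ℝ => u p.1 p.2)) (t, x))) x := by
      simpa only [starRingEnd_apply] using (dxU1 t x).star
    simpa only [Function.comp_def, Complex.reCLM_apply, Pi.mul_apply, Pi.add_apply] using
      Complex.reCLM.hasFDerivAt.comp_hasDerivAt x ((dxU1 t x).mul hc1)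
  rw [d3.deriv]
  -- derivative of v
  rw [(dxG t x).deriv]
  -- |u|^2 in the alpha term
  have e4 : ‖u t x‖ ^ 2 = (u t x * (starRingEnd ℂ) (u t x)).re := by
    rw [Complex.sq_norm, Complex.mul_conj, Complex.ofReal_re]
  rw [e4]
  -- derivative of |u|^4
  have e5 : (fun y => ‖u t y‖ ^ 4)
      = fun y => ((u t y * (starRingEnd ℂ) (u t y)).re) ^ 2 := by
    funext y
    rw [show (4 : ℕ) = 2 * 2 from rfl, pow_mul, Complex.sq_norm, Complex.mul_conj,
      Complex.ofReal_re]
  rw [e5]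
  have base : HasDerivAt (fun y => (u t y * (starRingEnd ℂ) (u t y)).re)
      ((Dx (fun p : ℝ × ℝ => u p.1 p.2) (t, x) * (starRingEnd ℂ) (u t x)
        + u t x * (starRingEnd ℂ) (Dx (fun p : ℝ × ℝ => u p.1 p.2) (t, x))).re) x := by
    have hconj : HasDerivAt (fun y => (starRingEnd ℂ) (u t y))
        ((starRingEnd ℂ) (Dx (fun p : ℝ × ℝ => u p.1 p.2) (t, x))) x := by
      simpa only [starRingEnd_apply] using (dxF t x).star
    simpa only [Function.comp_def, Complex.reCLM_apply, Pi.mul_apply, Pi.add_apply] using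
      Complex.reCLM.hasFDerivAt.comp_hasDerivAt x ((dxF t x).mul hconj)
  rw [show (fun y => (u t y * (starRingEnd ℂ) (u t y)).re ^ 2)
      = (fun y => (u t y * (starRingEnd ℂ) (u t y)).re) ^ 2 from rfl, (base.pow 2).deriv]
  rw [key t x, keyx t x]
  simp only [Complex.add_re, Complex.add_im, Complex.sub_re, Complex.sub_im, Complex.mul_re,
    Complex.mul_im, Complex.neg_re, Complex.neg_im, Complex.I_re, Complex.I_im, Complex.conj_re,
    Complex.conj_im, Complex.ofReal_re, Complex.ofReal_im, pow_one, Nat.cast_ofNat, mul_zero,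
    zero_mul, mul_one, one_mul, zero_sub, sub_zero, zero_add, add_zero, neg_neg, neg_zero]
  ring
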